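/- arXiv:1509.04093 — 6 statements merged into one kernel-verified Lean document; each statement's English description precedes it below -/
import Mathlib

section
/- Let β̂ minimize β ↦ ‖Y − Xβ‖_n + λΩ(β) over ℝ^p and suppose ‖ε̂‖_n > 0 where ε̂ := Y − Xβ̂. Then β̂ is a global minimizer of this objective if and only if: in the case β̂ = 0, Ω*(ε̂ᵀX/(n‖ε̂‖_n)) ≤ λ; and in the case β̂ ≠ 0, Ω*(ε̂ᵀX/(n‖ε̂‖_n)) = λ and ε̂ᵀXβ̂/(n‖ε̂‖_n) = λΩ(β̂). -/
/-!
Write `ε̂ = Y - Xβ̂` and `g = Xᵀε̂ / (n‖ε̂‖_n)`. Since `‖ε̂‖_n > 0`, the loss `β ↦ ‖Y - Xβ‖_n` is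
differentiable at `β̂` with gradient `-g`, and by Cauchy–Schwarz it lies above its tangent plane.
Hence `β̂` minimizes the (convex) objective iff `g` is a subgradient of `λΩ` at `β̂`, that is,
`zᵀg ≤ λΩ(z)` for all `z` and `β̂ᵀg = λΩ(β̂)`. The first condition says `Ω*(g) ≤ λ` (the supremum
defining `Ω*` is finite because `Ω` is continuous and positive on the compact unit sphere), and
when `β̂ ≠ 0` the second one, tested against `z = β̂ / Ω(β̂)`, gives `Ω*(g) ≥ λ`.
-/

open scoped BigOperators

/-- The normalized norm `‖a‖_n = sqrt( (∑ a_j^2) / n )`. -/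
noncomputable def normN {n : ℕ} (a : Fin n → ℝ) : ℝ :=
  Real.sqrt ((∑ j, a j ^ 2) / n)

/-- `Ω` is a norm on `ℝ^p`. -/
def IsNorm {p : ℕ} (Ω : (Fin p → ℝ) → ℝ) : Prop :=
  (∀ x y, Ω (x + y) ≤ Ω x + Ω y) ∧
  (∀ (c : ℝ) (x), Ω (c • x) = |c| * Ω x) ∧
  (∀ x, Ω x = 0 → x = 0)

/-- The dual norm `Ω*(x) = max_{Ω(z) ≤ 1} zᵀx`. -/
noncomputable def dualNorm {p : ℕ} (Ω : (Fin p → ℝ) → ℝ) (x : Fin p → ℝ) : ℝ :=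
  sSup {r | ∃ z, Ω z ≤ 1 ∧ r = ∑ i, z i * x i}

/-- `β_S` : the restriction of `β` to `S`, extended by zero off `S`. -/
def restrict {p : ℕ} (S : Finset (Fin p)) (β : Fin p → ℝ) : Fin p → ℝ :=
  fun i => if i ∈ S then β i else 0

/-- `Ω'` is a norm on the coordinates in `Sᶜ` (definiteness is required only for
vectors vanishing on `S`). -/
def IsNormOn {p : ℕ} (S : Finset (Fin p)) (Ω' : (Fin p → ℝ) → ℝ) : Prop :=
  (∀ x y, Ω' (x + y) ≤ Ω' x + Ω' y) ∧
  (∀ (c : ℝ) (x), Ω' (c • x) = |c| * Ω' x) ∧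
  (∀ x, (∀ i ∈ S, x i = 0) → Ω' x = 0 → x = 0)

/-- `Ω` is weakly decomposable for the (allowed) set `S`, with associated norm `Ωc`
on the coordinates in `Sᶜ`. -/
def WeaklyDecomposable {p : ℕ} (Ω : (Fin p → ℝ) → ℝ) (S : Finset (Fin p))
    (Ωc : (Fin p → ℝ) → ℝ) : Prop :=
  IsNorm Ω ∧ IsNormOn S Ωc ∧
  ∀ β : Fin p → ℝ, Ω (restrict S β) + Ωc (restrict Sᶜ β) ≤ Ω β

/-- The `Ω`-eigenvalue `δ_Ω(L,S)`. -/
noncomputable def omegaEigen {n p : ℕ} (X : Matrix (Fin n) (Fin p) ℝ)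
    (Ω Ωc : (Fin p → ℝ) → ℝ) (S : Finset (Fin p)) (L : ℝ) : ℝ :=
  sInf {r | ∃ β : Fin p → ℝ, Ω (restrict S β) = 1 ∧ Ωc (restrict Sᶜ β) ≤ L ∧
    r = normN (X.mulVec (restrict S β) - X.mulVec (restrict Sᶜ β))}

/-- The `Ω`-effective sparsity `Γ_Ω²(L,S) = 1/δ_Ω²(L,S)`. -/
noncomputable def effSparsity {n p : ℕ} (X : Matrix (Fin n) (Fin p) ℝ)
    (Ω Ωc : (Fin p → ℝ) → ℝ) (S : Finset (Fin p)) (L : ℝ) : ℝ :=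
  1 / (omegaEigen X Ω Ωc S L) ^ 2

open Matrix Set Topology

section normN

variable {n : ℕ}

lemma mul_normN_sq (a : Fin n → ℝ) : (n : ℝ) * normN a ^ 2 = a ⬝ᵥ a := by
  rcases Nat.eq_zero_or_pos n with rfl | hn
  · simp
  · rw [normN, Real.sq_sqrt (by positivity), mul_div_cancel₀ _ (by positivity)]
    simp only [dotProduct, sq]

lemma pos_of_normN_pos {a : Fin n → ℝ} (ha : 0 < normN a) : 0 < n :=
  Nat.pos_of_ne_zero fun h => by subst h; simp [normN] at ha

lemma dotProduct_div_le_normN_mul (a b : Fin n → ℝ) : a ⬝ᵥ b / n ≤ normN a * normN b := by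
  have hsqrt : ∀ c : Fin n → ℝ, normN c = √(∑ j, c j ^ 2) / √n :=
    fun c => Real.sqrt_div' _ (Nat.cast_nonneg n)
  rw [hsqrt, hsqrt, div_mul_div_comm, ← sq, Real.sq_sqrt (Nat.cast_nonneg n)]
  exact div_le_div_of_nonneg_right (Real.sum_mul_le_sqrt_mul_sqrt _ _ _) (Nat.cast_nonneg n)

lemma normN_sub_div_le_normN_sub {e : Fin n → ℝ} (he : 0 < normN e) (u : Fin n → ℝ) :
    normN e - e ⬝ᵥ u / (n * normN e) ≤ normN (e - u) := by
  have hn : (0 : ℝ) < n := Nat.cast_pos.mpr (pos_of_normN_pos he)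
  calc normN e - e ⬝ᵥ u / (n * normN e) = e ⬝ᵥ (e - u) / n / normN e := by
        rw [dotProduct_sub, ← mul_normN_sq]
        field_simp
    _ ≤ normN e * normN (e - u) / normN e :=
        div_le_div_of_nonneg_right (dotProduct_div_le_normN_mul _ _) he.le
    _ = normN (e - u) := by field_simp

lemma hasDerivAt_normN_sub_smul {e : Fin n → ℝ} (he : 0 < normN e) (u : Fin n → ℝ) :
    HasDerivAt (fun t : ℝ => normN (e - t • u)) (-(e ⬝ᵥ u / (n * normN e))) 0 := by
  have hsum : HasDerivAt (fun t : ℝ => (∑ j, (e - t • u) j ^ 2) / n)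
      ((∑ j, 2 * e j * -u j) / n) 0 := by
    refine (HasDerivAt.fun_sum fun j _ => ?_).div_const _
    simpa using (((hasDerivAt_id (0 : ℝ)).mul_const (u j)).const_sub (e j)).fun_pow 2
  have hQ : (∑ j, e j ^ 2) / n ≠ 0 := fun h => he.ne' (by rw [normN, h, Real.sqrt_zero])
  refine (hsum.sqrt (by simpa using hQ)).congr_deriv ?_
  have hr : √((∑ j, e j ^ 2) / n) = normN e := rfl
  simp only [zero_smul, sub_zero, hr, dotProduct, mul_neg, Finset.sum_neg_distrib, mul_assoc,
    ← Finset.mul_sum]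
  field_simp

end normN

lemma HasDerivWithinAt.nonneg_of_eventually_le {φ : ℝ → ℝ} {d x : ℝ}
    (hφ : HasDerivWithinAt φ d (Ioi x) x) (hmin : ∀ᶠ t in 𝓝[>] x, φ x ≤ φ t) : 0 ≤ d := by
  refine ge_of_tendsto ((hasDerivWithinAt_iff_tendsto_slope' self_notMem_Ioi).mp hφ) ?_
  filter_upwards [hmin, self_mem_nhdsWithin] with t ht (hxt : x < t)
  rw [slope_def_field]
  exact div_nonneg (sub_nonneg.mpr ht) (sub_nonneg.mpr hxt.le)

section Subgradient

variable {ι : Type*} [Fintype ι]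

def IsSubgradient (φ : (ι → ℝ) → ℝ) (b g : ι → ℝ) : Prop :=
  ∀ β, φ b + (β - b) ⬝ᵥ g ≤ φ β

theorem forall_le_add_iff_isSubgradient {h φ : (ι → ℝ) → ℝ} {b g : ι → ℝ}
    (hφ : ConvexOn ℝ univ φ) (hh : ∀ β, h b - (β - b) ⬝ᵥ g ≤ h β)
    (hh' : ∀ z, HasDerivAt (fun t : ℝ => h (b + t • z)) (-(z ⬝ᵥ g)) 0) :
    (∀ β, h b + φ b ≤ h β + φ β) ↔ IsSubgradient φ b g := by
  refine ⟨fun hmin β => ?_, fun hsub β => by linarith [hh β, hsub β]⟩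
  set z := β - b
  -- Bound `φ` on the segment from `b` to `β` by its chord; the right derivative at `0` of the
  -- resulting majorant of the objective along the segment is then nonnegative.
  have hψ : HasDerivAt (fun t : ℝ => h (b + t • z) + φ b + t * (φ β - φ b))
      (-(z ⬝ᵥ g) + (φ β - φ b)) 0 := by
    simpa using ((hh' z).add_const (φ b)).fun_add ((hasDerivAt_id (0 : ℝ)).mul_const (φ β - φ b))
  have hmin' : ∀ᶠ t in 𝓝[>] (0 : ℝ), h (b + (0 : ℝ) • z) + φ b + 0 * (φ β - φ b)
      ≤ h (b + t • z) + φ b + t * (φ β - φ b) := by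
    filter_upwards [Ioo_mem_nhdsGT zero_lt_one] with t ⟨ht0, ht1⟩
    have hconv : φ (b + t • z) ≤ φ b + t * (φ β - φ b) := by
      have hpt : (1 - t) • b + t • β = b + t • z := by simp only [z]; module
      have := hφ.2 (mem_univ b) (mem_univ β) (sub_nonneg.mpr ht1.le) ht0.le (by ring)
      rw [hpt, smul_eq_mul, smul_eq_mul] at this
      linarith
    simpa using (hmin (b + t • z)).trans (by linarith)
  have := hψ.hasDerivWithinAt.nonneg_of_eventually_le hmin'
  linarith

end Subgradient

lemma dotProduct_div_const {ι : Type*} [Fintype ι] (u v : ι → ℝ) (c : ℝ) :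
    (u ⬝ᵥ fun j => v j / c) = v ⬝ᵥ u / c := by
  simp only [dotProduct, Finset.sum_div, mul_div_assoc', mul_comm]

namespace IsNorm

variable {p : ℕ} {Ω : (Fin p → ℝ) → ℝ}

def toSeminorm (hΩ : IsNorm Ω) : Seminorm ℝ (Fin p → ℝ) :=
  Seminorm.of Ω hΩ.1 fun c x => by rw [hΩ.2.1, Real.norm_eq_abs]

lemma map_zero (hΩ : IsNorm Ω) : Ω 0 = 0 := _root_.map_zero hΩ.toSeminorm

lemma nonneg (hΩ : IsNorm Ω) (x : Fin p → ℝ) : 0 ≤ Ω x := apply_nonneg hΩ.toSeminorm x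

lemma pos (hΩ : IsNorm Ω) {x : Fin p → ℝ} (hx : x ≠ 0) : 0 < Ω x :=
  (hΩ.nonneg x).lt_of_ne fun h => hx (hΩ.2.2 x h.symm)

lemma continuous (hΩ : IsNorm Ω) : Continuous Ω :=
  continuousOn_univ.mp (hΩ.toSeminorm.convexOn.continuousOn isOpen_univ)

lemma convexOn_const_mul (hΩ : IsNorm Ω) {lam : ℝ} (hlam : 0 ≤ lam) :
    ConvexOn ℝ univ fun β => lam * Ω β :=
  hΩ.toSeminorm.convexOn.smul hlam

/-- The ratio `zᵀx / Ω z` is bounded on the compact unit sphere and invariant under positive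
scaling. -/
lemma exists_dotProduct_le_mul (hΩ : IsNorm Ω) (x : Fin p → ℝ) :
    ∃ B, ∀ z, z ⬝ᵥ x ≤ B * Ω z := by
  have hcont : ContinuousOn (fun z => z ⬝ᵥ x / Ω z) (Metric.sphere 0 1) :=
    (continuous_id.dotProduct continuous_const).continuousOn.div hΩ.continuous.continuousOn
      fun z hz => (hΩ.pos (ne_zero_of_mem_unit_sphere ⟨z, hz⟩)).ne'
  obtain ⟨B, hB⟩ := (isCompact_sphere (0 : Fin p → ℝ) 1).exists_bound_of_continuousOn hcont
  refine ⟨B, fun z => ?_⟩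
  rcases eq_or_ne z 0 with rfl | hz
  · simp [hΩ.map_zero]
  have hz' : 0 < ‖z‖ := norm_pos_iff.mpr hz
  have hmem : ‖z‖⁻¹ • z ∈ Metric.sphere (0 : Fin p → ℝ) 1 := by
    rw [mem_sphere_zero_iff_norm, norm_smul, norm_inv, norm_norm, inv_mul_cancel₀ hz'.ne']
  have hratio : (‖z‖⁻¹ • z) ⬝ᵥ x / Ω (‖z‖⁻¹ • z) = z ⬝ᵥ x / Ω z := by
    rw [smul_dotProduct, hΩ.2.1, abs_of_pos (inv_pos.mpr hz'), smul_eq_mul,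
      mul_div_mul_left _ _ (inv_ne_zero hz'.ne')]
  have := (le_abs_self _).trans (hB _ hmem)
  rw [hratio] at this
  exact (div_le_iff₀ (hΩ.pos hz)).mp this

lemma bddAbove_dualNorm (hΩ : IsNorm Ω) (x : Fin p → ℝ) :
    BddAbove {r | ∃ z, Ω z ≤ 1 ∧ r = ∑ i, z i * x i} := by
  obtain ⟨B, hB⟩ := hΩ.exists_dotProduct_le_mul x
  refine ⟨|B|, ?_⟩
  rintro _ ⟨z, hz, rfl⟩
  calc z ⬝ᵥ x ≤ B * Ω z := hB z
    _ ≤ |B| * Ω z := mul_le_mul_of_nonneg_right (le_abs_self B) (hΩ.nonneg z)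
    _ ≤ |B| := mul_le_of_le_one_right (abs_nonneg B) hz

lemma dotProduct_le_dualNorm_mul (hΩ : IsNorm Ω) (x z : Fin p → ℝ) :
    z ⬝ᵥ x ≤ dualNorm Ω x * Ω z := by
  rcases eq_or_ne z 0 with rfl | hz
  · simp [hΩ.map_zero]
  have hΩz := hΩ.pos hz
  have hunit : Ω ((Ω z)⁻¹ • z) ≤ 1 := by
    rw [hΩ.2.1, abs_of_pos (inv_pos.mpr hΩz), inv_mul_cancel₀ hΩz.ne']
  have := le_csSup (hΩ.bddAbove_dualNorm x) ⟨_, hunit, rfl⟩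
  rw [← dotProduct, smul_dotProduct, smul_eq_mul, inv_mul_le_iff₀ hΩz] at this
  rwa [mul_comm]

lemma dualNorm_le_iff (hΩ : IsNorm Ω) {lam : ℝ} (hlam : 0 ≤ lam) (x : Fin p → ℝ) :
    dualNorm Ω x ≤ lam ↔ ∀ z, z ⬝ᵥ x ≤ lam * Ω z := by
  refine ⟨fun h z => (hΩ.dotProduct_le_dualNorm_mul x z).trans
    (mul_le_mul_of_nonneg_right h (hΩ.nonneg z)), fun h => Real.sSup_le ?_ hlam⟩
  rintro _ ⟨z, hz, rfl⟩
  exact (h z).trans (mul_le_of_le_one_right hlam hz)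

lemma isSubgradient_const_mul_iff (hΩ : IsNorm Ω) {lam : ℝ} (hlam : 0 ≤ lam) (b g : Fin p → ℝ) :
    IsSubgradient (fun β => lam * Ω β) b g ↔ dualNorm Ω g ≤ lam ∧ b ⬝ᵥ g = lam * Ω b := by
  rw [hΩ.dualNorm_le_iff hlam]
  refine ⟨fun h => ⟨fun z => ?_, ?_⟩, fun ⟨hle, heq⟩ β => ?_⟩
  · have : lam * Ω b + (b + z - b) ⬝ᵥ g ≤ lam * Ω (b + z) := h (b + z)
    rw [add_sub_cancel_left] at this
    nlinarith [hΩ.1 b z]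
  · have h0 : lam * Ω b + (0 - b) ⬝ᵥ g ≤ lam * Ω 0 := h 0
    have h2 : lam * Ω b + ((2 : ℝ) • b - b) ⬝ᵥ g ≤ lam * Ω ((2 : ℝ) • b) := h _
    rw [hΩ.map_zero, zero_sub, neg_dotProduct] at h0
    rw [hΩ.2.1, two_smul, add_sub_cancel_right, abs_two] at h2
    linarith
  · rw [sub_dotProduct]
    linarith [hle β]

lemma dualNorm_eq_of_dotProduct_eq (hΩ : IsNorm Ω) {lam : ℝ} {b g : Fin p → ℝ} (hb : b ≠ 0)
    (hle : dualNorm Ω g ≤ lam) (heq : b ⬝ᵥ g = lam * Ω b) : dualNorm Ω g = lam := by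
  refine hle.antisymm (le_of_mul_le_mul_right ?_ (hΩ.pos hb))
  rw [← heq]
  exact hΩ.dotProduct_le_dualNorm_mul g b

lemma isSubgradient_const_mul_iff_dualNorm (hΩ : IsNorm Ω) {lam : ℝ} (hlam : 0 ≤ lam)
    (b g : Fin p → ℝ) :
    IsSubgradient (fun β => lam * Ω β) b g ↔
      (b = 0 → dualNorm Ω g ≤ lam) ∧ (b ≠ 0 → dualNorm Ω g = lam ∧ b ⬝ᵥ g = lam * Ω b) := by
  rw [hΩ.isSubgradient_const_mul_iff hlam]
  rcases eq_or_ne b 0 with rfl | hb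
  · simp [hΩ.map_zero]
  · simp only [hb, IsEmpty.forall_iff, ne_eq, not_false_eq_true, forall_const, true_and]
    exact ⟨fun ⟨hle, heq⟩ => ⟨hΩ.dualNorm_eq_of_dotProduct_eq hb hle heq, heq⟩,
      fun ⟨hdual, heq⟩ => ⟨hdual.le, heq⟩⟩

end IsNorm

/-- KKT conditions for the square root regularization estimator.
For `β̂` with `‖ε̂‖_n > 0` (where `ε̂ = Y - Xβ̂`), `β̂` is a global minimizer of
`β ↦ ‖Y - Xβ‖_n + λΩ(β)` iff the stated dual-norm conditions hold. -/
theorem kkt_conditions {n p : ℕ} (Y : Fin n → ℝ) (X : Matrix (Fin n) (Fin p) ℝ)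
    (Ω : (Fin p → ℝ) → ℝ) (hΩ : IsNorm Ω) (lam : ℝ) (hlam : 0 < lam)
    (bh : Fin p → ℝ) (hres : 0 < normN (Y - X.mulVec bh)) :
    (∀ β : Fin p → ℝ,
        normN (Y - X.mulVec bh) + lam * Ω bh ≤ normN (Y - X.mulVec β) + lam * Ω β)
    ↔ ((bh = 0 →
          dualNorm Ω (fun j => Matrix.vecMul (Y - X.mulVec bh) X j
              / (n * normN (Y - X.mulVec bh))) ≤ lam)
        ∧ (bh ≠ 0 →
          dualNorm Ω (fun j => Matrix.vecMul (Y - X.mulVec bh) X j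
              / (n * normN (Y - X.mulVec bh))) = lam
          ∧ (∑ j, Matrix.vecMul (Y - X.mulVec bh) X j * bh j)
              / (n * normN (Y - X.mulVec bh)) = lam * Ω bh)) := by
  set ε := Y - X *ᵥ bh with hε
  have hdot : ∀ u, ε ⬝ᵥ X *ᵥ u / (n * normN ε) = u ⬝ᵥ fun j => vecMul ε X j / (n * normN ε) :=
    fun u => by rw [dotProduct_mulVec, dotProduct_div_const]
  have hgrad : ∀ β, normN ε - (β - bh) ⬝ᵥ (fun j => vecMul ε X j / (n * normN ε))
      ≤ normN (Y - X *ᵥ β) := fun β => by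
    rw [← hdot, show Y - X *ᵥ β = ε - X *ᵥ (β - bh) by rw [hε, mulVec_sub]; abel]
    exact normN_sub_div_le_normN_sub hres _
  have hderiv : ∀ z, HasDerivAt (fun t : ℝ => normN (Y - X *ᵥ (bh + t • z)))
      (-(z ⬝ᵥ fun j => vecMul ε X j / (n * normN ε))) 0 := fun z => by
    rw [← hdot]
    convert hasDerivAt_normN_sub_smul hres (X *ᵥ z) using 3
    rw [hε, mulVec_add, mulVec_smul, sub_add_eq_sub_sub]
  refine (forall_le_add_iff_isSubgradient (h := fun β => normN (Y - X *ᵥ β))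
    (hΩ.convexOn_const_mul hlam.le) hgrad hderiv).trans ?_
  rw [hΩ.isSubgradient_const_mul_iff_dualNorm hlam.le, ← hdot, dotProduct_mulVec]
  rfl
end

section
/- (Generalized KKT inequality.) Let β̂ minimize β ↦ ‖Y − Xβ‖_n + λΩ(β) over ℝ^p and suppose ‖ε̂‖_n ≠ 0 where ε̂ := Y − Xβ̂. Then for every β ∈ ℝ^p: ε̂ᵀX(β − β̂)/(n‖ε̂‖_n) + λΩ(β̂) ≤ λΩ(β). -/
open scoped BigOperators

/-- Generalized KKT inequality. If `β̂` minimizes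
`β ↦ ‖Y - Xβ‖_n + λΩ(β)` and `‖ε̂‖_n ≠ 0`, then for every `β`,
`ε̂ᵀX(β - β̂)/(n‖ε̂‖_n) + λΩ(β̂) ≤ λΩ(β)`. -/
theorem generalized_kkt {n p : ℕ} (Y : Fin n → ℝ) (X : Matrix (Fin n) (Fin p) ℝ)
    (Ω : (Fin p → ℝ) → ℝ) (hΩ : IsNorm Ω) (lam : ℝ) (hlam : 0 < lam)
    (bh : Fin p → ℝ)
    (hmin : ∀ β : Fin p → ℝ,
      normN (Y - X.mulVec bh) + lam * Ω bh ≤ normN (Y - X.mulVec β) + lam * Ω β)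
    (hres : normN (Y - X.mulVec bh) ≠ 0) :
    ∀ β : Fin p → ℝ,
      (∑ i, Matrix.vecMul (Y - X.mulVec bh) X i * (β i - bh i))
          / (n * normN (Y - X.mulVec bh))
        + lam * Ω bh ≤ lam * Ω β := by
  intro β
  obtain ⟨htri, hhom, -⟩ := hΩ
  have hnR : 0 < (n : ℝ) := by
    rcases Nat.eq_zero_or_pos n with h | h
    · exfalso; apply hres; subst h; simp [normN]
    · exact_mod_cast h
  set ε : Fin n → ℝ := Y - X.mulVec bh with hεdef
  set N : ℝ := normN ε with hNdef
  have hN0 : 0 ≤ N := Real.sqrt_nonneg _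
  have hNpos : 0 < N := hN0.lt_of_ne (Ne.symm hres)
  set v : Fin n → ℝ := X.mulVec (β - bh) with hvdef
  set D : ℝ := ∑ j, ε j * v j with hDdef
  set V : ℝ := ∑ j, v j ^ 2 with hVdef
  have hV0 : 0 ≤ V := Finset.sum_nonneg fun j _ => sq_nonneg _
  have hNne : N ≠ 0 := hNpos.ne'
  have hnne : (n : ℝ) ≠ 0 := hnR.ne'
  have hNsq : N ^ 2 = (∑ j, ε j ^ 2) / n := by
    rw [hNdef, normN, Real.sq_sqrt]
    exact div_nonneg (Finset.sum_nonneg fun j _ => sq_nonneg _) hnR.le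
  have hD : D = ∑ i, Matrix.vecMul ε X i * (β i - bh i) := by
    rw [hDdef, hvdef]
    have h1 := Matrix.dotProduct_mulVec ε X (β - bh)
    simpa [dotProduct, Pi.sub_apply] using h1
  have key : ∀ t : ℝ, 0 < t → t ≤ 1 →
      D / (n * N) + lam * Ω bh ≤ lam * Ω β + t * (V / (2 * N * n)) := by
    intro t ht0 ht1
    have hβt : Y - X.mulVec (bh + t • (β - bh)) = ε - t • v := by
      rw [hvdef, Matrix.mulVec_add, Matrix.mulVec_smul, hεdef]
      abel
    have hmin' := hmin (bh + t • (β - bh))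
    rw [hβt] at hmin'
    set Q : ℝ := normN (ε - t • v) with hQdef
    have hQ0 : 0 ≤ Q := Real.sqrt_nonneg _
    have hQsq : Q ^ 2 = ((∑ j, ε j ^ 2) - 2 * t * D + t ^ 2 * V) / n := by
      rw [hQdef, normN, Real.sq_sqrt
        (div_nonneg (Finset.sum_nonneg fun j _ => sq_nonneg _) hnR.le)]
      congr 1
      have expand : ∀ j, (ε - t • v) j ^ 2
          = ε j ^ 2 - 2 * t * (ε j * v j) + t ^ 2 * v j ^ 2 := by
        intro j
        simp only [Pi.sub_apply, Pi.smul_apply, smul_eq_mul]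
        ring
      simp only [expand]
      rw [Finset.sum_add_distrib, Finset.sum_sub_distrib, hDdef, hVdef,
        ← Finset.mul_sum, ← Finset.mul_sum]
    have hQN : Q - N ≤ (Q ^ 2 - N ^ 2) / (2 * N) := by
      rw [le_div_iff₀ (by linarith : (0:ℝ) < 2 * N)]
      nlinarith [sq_nonneg (Q - N)]
    have hdiff : (Q ^ 2 - N ^ 2) / (2 * N) = t * ((-2 * D + t * V) / (2 * n * N)) := by
      rw [hQsq, hNsq]
      field_simp
      ring
    have hconv : Ω (bh + t • (β - bh)) ≤ (1 - t) * Ω bh + t * Ω β := by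
      have h1 : bh + t • (β - bh) = (1 - t) • bh + t • β := by
        funext i
        simp only [Pi.add_apply, Pi.smul_apply, Pi.sub_apply, smul_eq_mul]
        ring
      rw [h1]
      calc Ω ((1 - t) • bh + t • β) ≤ Ω ((1 - t) • bh) + Ω (t • β) := htri _ _
      _ = |1 - t| * Ω bh + |t| * Ω β := by rw [hhom, hhom]
      _ = (1 - t) * Ω bh + t * Ω β := by
          rw [abs_of_nonneg (by linarith), abs_of_nonneg ht0.le]
    have hc := mul_le_mul_of_nonneg_left hconv hlam.le
    have h3 : t * (lam * Ω bh - lam * Ω β) ≤ t * ((-2 * D + t * V) / (2 * n * N)) := by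
      nlinarith [hmin', hc, hQN, hdiff]
    have step1 : lam * Ω bh - lam * Ω β ≤ (-2 * D + t * V) / (2 * n * N) :=
      le_of_mul_le_mul_left h3 ht0
    have hsplit : (-2 * D + t * V) / (2 * n * N) = -(D / (n * N)) + t * (V / (2 * N * n)) := by
      field_simp
    linarith [step1, hsplit.le, hsplit.ge]
  rw [← hD]
  by_contra hcon
  push_neg at hcon
  set C := V / (2 * N * n) with hCdef
  have hC0 : 0 ≤ C := by positivity
  have hg0 : 0 < D / (n * N) + lam * Ω bh - lam * Ω β := by linarith
  set g := D / (n * N) + lam * Ω bh - lam * Ω β with hgdef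
  have ht0 : 0 < min 1 (g / (C + 1)) := lt_min one_pos (by positivity)
  have hk := key _ ht0 (min_le_left _ _)
  have htC : min 1 (g / (C + 1)) * C < g := by
    calc min 1 (g / (C + 1)) * C ≤ (g / (C + 1)) * C :=
      mul_le_mul_of_nonneg_right (min_le_right _ _) hC0
    _ < g := by
        rw [div_mul_eq_mul_div, div_lt_iff₀ (by linarith : (0:ℝ) < C + 1)]
        nlinarith
  linarith
end

section
/- Let ε ∈ ℝ^n have i.i.d. N(0, σ²) coordinates with σ > 0, and let 0 < Δ ≤ 1. Then P( ‖ε‖_n ≤ σΔ ) ≤ exp( −(n/4)(1 − Δ²)² ). -/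
open scoped BigOperators

/-!
Chernoff bound for the lower tail of `∑ εᵢ²`: for `s ≤ 0`,
`P(∑ εᵢ² ≤ nσ²Δ²) ≤ e^{-s nσ²Δ²} (1 - 2σ²s)^{-n/2}`, the Gaussian integral giving the moment
generating function of `εᵢ²`. With `u = 1 - Δ²` and `s = -u / (2σ²)` the exponent is
`(n/2) (u (1 - u) - log (1 + u))`, and `log (1 + u) ≥ u - u²/2` bounds it by `-n u² / 4`.
-/

open MeasureTheory ProbabilityTheory

open Real
open scoped NNReal

lemma normN_le_iff_sum_sq_le {n : ℕ} (a : Fin n → ℝ) {c : ℝ} (hc : 0 ≤ c) :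
    normN a ≤ c ↔ ∑ j, a j ^ 2 ≤ n * c ^ 2 := by
  rcases n.eq_zero_or_pos with rfl | hn
  · simp [normN, hc]
  rw [normN, sqrt_le_left hc, div_le_iff₀ (by positivity), mul_comm]

-- For `2 v s ≥ 1` both sides are junk `0`: `integral_gaussian` and `Real.sqrt` agree there.
lemma integral_exp_mul_sq_gaussianReal {v : ℝ≥0} (hv : v ≠ 0) (s : ℝ) :
    ∫ x, exp (s * x ^ 2) ∂gaussianReal 0 v = √(1 - 2 * v * s)⁻¹ := by
  have hv0 : (0 : ℝ) < v := by positivity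
  have hdens (x : ℝ) : gaussianPDFReal 0 v x • exp (s * x ^ 2)
      = (√(2 * π * v))⁻¹ * exp (-((1 - 2 * v * s) / (2 * v)) * x ^ 2) := by
    rw [gaussianPDFReal, smul_eq_mul, mul_assoc, ← exp_add]
    congr 2
    field_simp
    ring
  rw [integral_gaussianReal_eq_integral_smul hv, funext hdens, integral_const_mul,
    integral_gaussian, ← sqrt_inv, ← sqrt_mul (by positivity), div_div_eq_mul_div]
  congr 1
  field_simp

lemma exp_mul_inv_sqrt_one_add_pow_le {u : ℝ} (hu : 0 ≤ u) (n : ℕ) :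
    exp (n * u * (1 - u) / 2) * √(1 + u)⁻¹ ^ n ≤ exp (-(n / 4) * u ^ 2) := by
  have hlog : u - u ^ 2 / 2 ≤ log (1 + u) := by
    refine le_trans ?_ (le_log_one_add_of_nonneg hu)
    rw [le_div_iff₀ (by positivity)]
    nlinarith [pow_nonneg hu 3]
  rw [sqrt_eq_rpow, rpow_def_of_pos (by positivity), log_inv, ← exp_nat_mul, ← exp_add,
    exp_le_exp]
  nlinarith [mul_le_mul_of_nonneg_left hlog (n.cast_nonneg : (0 : ℝ) ≤ n)]

section

variable {Ω : Type*} [MeasurableSpace Ω] {μ : Measure Ω} {v : ℝ≥0}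

lemma mgf_sq_of_map_eq_gaussianReal {X : Ω → ℝ} (hX : μ.map X = gaussianReal 0 v) (hv : v ≠ 0)
    (s : ℝ) : mgf (fun ω => X ω ^ 2) μ s = √(1 - 2 * v * s)⁻¹ := by
  have hXm : AEMeasurable X μ := .of_map_ne_zero (hX ▸ IsProbabilityMeasure.ne_zero _)
  rw [mgf, ← integral_exp_mul_sq_gaussianReal hv, ← hX, integral_map hXm (by fun_prop)]

lemma measureReal_sum_sq_le_le {ι : Type*} [Fintype ι] {X : ι → Ω → ℝ}
    (hX : ∀ i, μ.map (X i) = gaussianReal 0 v) (hv : v ≠ 0) (hindep : iIndepFun X μ)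
    (a : ℝ) {s : ℝ} (hs : s ≤ 0) :
    μ.real {ω | ∑ i, X i ω ^ 2 ≤ a}
      ≤ exp (-s * a) * √(1 - 2 * v * s)⁻¹ ^ Fintype.card ι := by
  have := hindep.isProbabilityMeasure
  have hXm i : AEMeasurable (X i) μ := .of_map_ne_zero (hX i ▸ IsProbabilityMeasure.ne_zero _)
  set Y : ι → Ω → ℝ := fun i ω => X i ω ^ 2 with hY
  have hYindep : iIndepFun Y μ := hindep.comp (fun _ x => x ^ 2) fun _ => by fun_prop
  have hYm i : AEMeasurable (Y i) μ := (hXm i).pow_const 2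
  have hint : Integrable (fun ω => exp (s * (∑ i, Y i) ω)) μ := by
    refine .of_bound (by fun_prop) 1 (ae_of_all _ fun ω => ?_)
    rw [norm_of_nonneg (exp_nonneg _), exp_le_one_iff, Finset.sum_apply]
    exact mul_nonpos_of_nonpos_of_nonneg hs (by positivity)
  calc μ.real {ω | ∑ i, X i ω ^ 2 ≤ a} = μ.real {ω | (∑ i, Y i) ω ≤ a} := by
        simp only [hY, Finset.sum_apply]
    _ ≤ exp (-s * a) * mgf (∑ i, Y i) μ s := measure_le_le_exp_mul_mgf a hs hint
    _ = exp (-s * a) * √(1 - 2 * v * s)⁻¹ ^ Fintype.card ι := by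
        rw [hYindep.mgf_sum₀ hYm,
          Finset.prod_congr rfl fun i _ => mgf_sq_of_map_eq_gaussianReal (hX i) hv s,
          Finset.prod_const, Finset.card_univ]

lemma measureReal_sum_sq_le_le_exp {ι : Type*} [Fintype ι] {X : ι → Ω → ℝ}
    (hX : ∀ i, μ.map (X i) = gaussianReal 0 v) (hv : v ≠ 0) (hindep : iIndepFun X μ)
    {Δ : ℝ} (hΔ : Δ ^ 2 ≤ 1) :
    μ.real {ω | ∑ i, X i ω ^ 2 ≤ Fintype.card ι * v * Δ ^ 2}
      ≤ exp (-(Fintype.card ι / 4) * (1 - Δ ^ 2) ^ 2) := by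
  have hv0 : (0 : ℝ) < v := by positivity
  have hu : 0 ≤ 1 - Δ ^ 2 := sub_nonneg.2 hΔ
  have hs : -(1 - Δ ^ 2) / (2 * v) ≤ 0 :=
    div_nonpos_of_nonpos_of_nonneg (by linarith) (by positivity)
  have hexp : -(-(1 - Δ ^ 2) / (2 * v)) * (Fintype.card ι * v * Δ ^ 2)
      = Fintype.card ι * (1 - Δ ^ 2) * (1 - (1 - Δ ^ 2)) / 2 := by
    field_simp
    ring
  have hvar : 1 - 2 * v * (-(1 - Δ ^ 2) / (2 * v)) = 1 + (1 - Δ ^ 2) := by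
    field_simp
    ring
  calc _ ≤ _ := measureReal_sum_sq_le_le hX hv hindep _ hs
    _ = exp (Fintype.card ι * (1 - Δ ^ 2) * (1 - (1 - Δ ^ 2)) / 2)
        * √(1 + (1 - Δ ^ 2))⁻¹ ^ Fintype.card ι := by
        rw [hexp, hvar]
    _ ≤ _ := exp_mul_inv_sqrt_one_add_pow_le hu _

end

theorem chi_lower_tail_general {n : ℕ} {Ω' : Type*} [MeasurableSpace Ω']
    (μ : Measure Ω')
    (ε : Ω' → Fin n → ℝ)
    (σ : ℝ) (hσ : 0 < σ)
    (hgauss : ∀ i, μ.map (fun ω => ε ω i) = gaussianReal 0 ⟨σ ^ 2, sq_nonneg σ⟩)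
    (hindep : iIndepFun
      (fun i ω => ε ω i) μ)
    (Δ : ℝ) (hΔ0 : 0 < Δ) (hΔ1 : Δ ≤ 1) :
    (μ {ω | normN (ε ω) ≤ σ * Δ}).toReal
      ≤ Real.exp (-((n : ℝ) / 4) * (1 - Δ ^ 2) ^ 2) := by
  have hv : (⟨σ ^ 2, sq_nonneg σ⟩ : ℝ≥0) ≠ 0 :=
    fun h => (pow_pos hσ 2).ne' (congrArg NNReal.toReal h)
  have hevent : {ω | normN (ε ω) ≤ σ * Δ} = {ω | ∑ i, ε ω i ^ 2 ≤ n * σ ^ 2 * Δ ^ 2} := by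
    ext ω
    rw [Set.mem_ofPred_eq, Set.mem_ofPred_eq, normN_le_iff_sum_sq_le _ (by positivity), mul_pow,
      mul_assoc]
  have htail := measureReal_sum_sq_le_le_exp hgauss hv hindep (pow_le_one₀ hΔ0.le hΔ1)
  rw [Fintype.card_fin] at htail
  rw [← measureReal_def, hevent]
  exact htail

/-- for i.i.d. `N(0,σ²)` errors and `0 < Δ ≤ 1`,
`P(‖ε‖_n ≤ σΔ) ≤ exp(−(n/4)(1 − Δ²)²)`. -/
theorem chi_lower_tail {n : ℕ} {Ω' : Type*} [MeasurableSpace Ω']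
    (μ : Measure Ω') [IsProbabilityMeasure μ]
    (ε : Ω' → Fin n → ℝ) (hmeas : ∀ i, Measurable fun ω => ε ω i)
    (σ : ℝ) (hσ : 0 < σ)
    (hgauss : ∀ i, μ.map (fun ω => ε ω i) = gaussianReal 0 ⟨σ ^ 2, sq_nonneg σ⟩)
    (hindep : iIndepFun
      (fun i ω => ε ω i) μ)
    (Δ : ℝ) (hΔ0 : 0 < Δ) (hΔ1 : Δ ≤ 1) :
    (μ {ω | normN (ε ω) ≤ σ * Δ}).toReal
      ≤ Real.exp (-((n : ℝ) / 4) * (1 - Δ ^ 2) ^ 2) :=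
  chi_lower_tail_general μ ε σ hσ hgauss hindep Δ hΔ0 hΔ1
end

section
/- Let ε ∈ ℝ^n have i.i.d. N(0, σ²) coordinates with σ > 0. Then for every x > 0: P( ‖ε‖_n² ≤ σ²(1 + 2x + 2x²) ) ≥ 1 − exp( −n·x² ). -/
open scoped BigOperators

open MeasureTheory ProbabilityTheory

open Real
open scoped NNReal

/-! Chernoff's method: for a centred Gaussian `ε` of variance `v` and `2tv < 1`,
`E exp(t ε²) = (1 - 2tv)^(-1/2)`, so Markov's inequality applied to `exp(t ∑ εᵢ²)`, with `t`
chosen optimally for the threshold `n v u`, bounds `P(∑ εᵢ² ≥ n v u)` by `(√u e^{-(u-1)/2})^n`.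
For `u = 1 + 2x + 2x² ≤ e^{2x}` this is at most `e^{-n x²}`. -/

lemma normN_sq {n : ℕ} (a : Fin n → ℝ) : normN a ^ 2 = (∑ j, a j ^ 2) / n :=
  sq_sqrt (by positivity)

lemma mul_le_sum_sq_of_le_normN_sq {n : ℕ} {a : Fin n → ℝ} {c : ℝ} (h : c ≤ normN a ^ 2) :
    n * c ≤ ∑ j, a j ^ 2 := by
  rw [normN_sq] at h
  rcases n.eq_zero_or_pos with rfl | hn
  · simp
  · exact (le_div_iff₀' (by positivity)).1 h

lemma sqrt_mul_exp_le_exp_neg_sq {x : ℝ} (hx : 0 ≤ x) :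
    √(1 + 2 * x + 2 * x ^ 2) * exp (-(1 + 2 * x + 2 * x ^ 2 - 1) / 2) ≤ exp (-x ^ 2) := by
  have hsqrt : √(1 + 2 * x + 2 * x ^ 2) ≤ exp x := by
    refine sqrt_le_iff.2 ⟨(exp_pos x).le, ?_⟩
    calc 1 + 2 * x + 2 * x ^ 2 = 1 + 2 * x + (2 * x) ^ 2 / 2 := by ring
      _ ≤ exp (2 * x) := quadratic_le_exp_of_nonneg (by positivity)
      _ = exp x ^ 2 := by rw [sq, ← exp_add, two_mul]
  calc _ ≤ exp x * exp (-(1 + 2 * x + 2 * x ^ 2 - 1) / 2) := by gcongr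
    _ = exp (-x ^ 2) := by rw [← exp_add]; ring_nf

namespace ProbabilityTheory

variable {v : ℝ≥0} {t : ℝ}

lemma gaussianPDFReal_zero_mul_exp_mul_sq (t y : ℝ) :
    gaussianPDFReal 0 v y * exp (t * y ^ 2)
      = (√(2 * π * v))⁻¹ * exp (-((1 - 2 * t * v) / (2 * v)) * y ^ 2) := by
  rcases eq_or_ne (v : ℝ) 0 with hv | hv
  · simp [gaussianPDFReal, hv]
  rw [gaussianPDFReal, mul_assoc, ← exp_add]
  congr 2
  field_simp
  ring

lemma integrable_exp_mul_sq_gaussianReal (hv : v ≠ 0) (ht : 2 * t * v < 1) :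
    Integrable (fun y ↦ exp (t * y ^ 2)) (gaussianReal 0 v) := by
  have hb : 0 < (1 - 2 * t * v) / (2 * v) := div_pos (by linarith) (by positivity)
  rw [gaussianReal_of_var_ne_zero _ hv, integrable_withDensity_iff (measurable_gaussianPDF 0 v)
    (ae_of_all _ fun _ ↦ gaussianPDF_lt_top)]
  simp_rw [toReal_gaussianPDF, mul_comm (exp _), gaussianPDFReal_zero_mul_exp_mul_sq]
  exact (integrable_exp_neg_mul_sq hb).const_mul _

lemma integral_exp_mul_sq_gaussianReal (hv : v ≠ 0) (ht : 2 * t * v < 1) :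
    ∫ y, exp (t * y ^ 2) ∂gaussianReal 0 v = (√(1 - 2 * t * v))⁻¹ := by
  have hv' : (0 : ℝ) < v := by positivity
  have hs : 0 < 1 - 2 * t * v := by linarith
  simp_rw [integral_gaussianReal_eq_integral_smul hv, smul_eq_mul,
    gaussianPDFReal_zero_mul_exp_mul_sq, integral_const_mul, integral_gaussian]
  rw [← sqrt_inv, ← sqrt_inv, ← sqrt_mul (by positivity)]
  congr 1
  field_simp

variable {Ω : Type*} [MeasurableSpace Ω] {μ : Measure Ω} {X : Ω → ℝ}

lemma integrable_exp_mul_sq_of_map_eq_gaussianReal (hX : Measurable X)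
    (hlaw : μ.map X = gaussianReal 0 v) (hv : v ≠ 0) (ht : 2 * t * v < 1) :
    Integrable (fun ω ↦ exp (t * X ω ^ 2)) μ := by
  have h := integrable_exp_mul_sq_gaussianReal hv ht
  rw [← hlaw] at h
  exact (integrable_map_measure (by fun_prop) hX.aemeasurable).1 h

lemma mgf_sq_of_map_eq_gaussianReal (hX : Measurable X)
    (hlaw : μ.map X = gaussianReal 0 v) (hv : v ≠ 0) (ht : 2 * t * v < 1) :
    mgf (fun ω ↦ X ω ^ 2) μ t = (√(1 - 2 * t * v))⁻¹ := by
  rw [mgf, ← integral_exp_mul_sq_gaussianReal hv ht, ← hlaw,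
    integral_map hX.aemeasurable (by fun_prop)]

lemma measureReal_sum_sq_ge_le [IsProbabilityMeasure μ] {ι : Type*} [Fintype ι]
    {X : ι → Ω → ℝ} (hX : ∀ i, Measurable (X i)) (hlaw : ∀ i, μ.map (X i) = gaussianReal 0 v)
    (hindep : iIndepFun X μ) (hv : v ≠ 0) {u : ℝ} (hu : 1 ≤ u) :
    μ.real {ω | Fintype.card ι * v * u ≤ ∑ i, X i ω ^ 2}
      ≤ (√u * exp (-(u - 1) / 2)) ^ Fintype.card ι := by
  have hv' : (0 : ℝ) < v := by positivity
  set t : ℝ := (u - 1) / (2 * v * u)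
  have ht : 0 ≤ t := by positivity
  have hts : 1 - 2 * t * v = u⁻¹ := by simp only [t]; field_simp; ring
  have ht1 : 2 * t * v < 1 := by linarith [inv_pos.2 (by linarith : (0:ℝ) < u)]
  have hsq : iIndepFun (fun i ω ↦ X i ω ^ 2) μ := hindep.comp (fun _ y ↦ y ^ 2) (fun _ ↦ by fun_prop)
  have hchernoff := measure_ge_le_exp_mul_mgf (μ := μ) (X := ∑ i, fun ω ↦ X i ω ^ 2)
    (Fintype.card ι * v * u) ht
    (hsq.integrable_exp_mul_sum (fun i ↦ by fun_prop) fun i _ ↦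
      integrable_exp_mul_sq_of_map_eq_gaussianReal (hX i) (hlaw i) hv ht1)
  rw [hsq.mgf_sum (fun i ↦ by fun_prop)] at hchernoff
  simp only [mgf_sq_of_map_eq_gaussianReal (hX _) (hlaw _) hv ht1, hts, sqrt_inv, inv_inv,
    Finset.prod_const, Finset.card_univ, Finset.sum_apply] at hchernoff
  convert hchernoff using 1
  rw [mul_pow, ← exp_nat_mul, mul_comm]
  congr 2
  simp only [t]
  field_simp

end ProbabilityTheory

/-- for i.i.d. `N(0,σ²)` errors and `x > 0`,
`P(‖ε‖_n² ≤ σ²(1 + 2x + 2x²)) ≥ 1 − exp(−n x²)`. -/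
theorem chi_upper_tail {n : ℕ} {Ω' : Type*} [MeasurableSpace Ω']
    (μ : Measure Ω') [IsProbabilityMeasure μ]
    (ε : Ω' → Fin n → ℝ) (hmeas : ∀ i, Measurable fun ω => ε ω i)
    (σ : ℝ) (hσ : 0 < σ)
    (hgauss : ∀ i, μ.map (fun ω => ε ω i) = gaussianReal 0 ⟨σ ^ 2, sq_nonneg σ⟩)
    (hindep : iIndepFun (fun i ω => ε ω i) μ)
    (x : ℝ) (hx : 0 < x) :
    1 - Real.exp (-(n : ℝ) * x ^ 2)
      ≤ (μ {ω | normN (ε ω) ^ 2 ≤ σ ^ 2 * (1 + 2 * x + 2 * x ^ 2)}).toReal := by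
  set u := 1 + 2 * x + 2 * x ^ 2
  set A := {ω | normN (ε ω) ^ 2 ≤ σ ^ 2 * u}
  have hu : 1 ≤ u := by linarith [sq_nonneg x]
  have hv : (⟨σ ^ 2, sq_nonneg σ⟩ : ℝ≥0) ≠ 0 := fun h ↦
    (pow_pos hσ 2).ne' (congrArg NNReal.toReal h)
  have htail : μ.real Aᶜ ≤ exp (-n * x ^ 2) := calc
    _ ≤ μ.real {ω | n * σ ^ 2 * u ≤ ∑ i, ε ω i ^ 2} := by
      refine measureReal_mono fun ω hω ↦ ?_
      have hω : σ ^ 2 * u < normN (ε ω) ^ 2 := not_le.1 hω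
      exact (mul_assoc _ _ _).trans_le (mul_le_sum_sq_of_le_normN_sq hω.le)
    _ ≤ (√u * exp (-(u - 1) / 2)) ^ n := by
      have h := measureReal_sum_sq_ge_le hmeas hgauss hindep hv hu
      rwa [Fintype.card_fin] at h
    _ ≤ exp (-x ^ 2) ^ n := by gcongr; exact sqrt_mul_exp_le_exp_neg_sq hx.le
    _ = exp (-n * x ^ 2) := by rw [← exp_nat_mul]; ring_nf
  have hunion := measureReal_union_le (μ := μ) A Aᶜ
  rw [Set.union_compl_self, probReal_univ] at hunion
  change _ ≤ μ.real A
  linarith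
end

section
/- (Weak decomposability of the sorted ℓ₁ (SLOPE) norm.) Let λ₁ ≥ λ₂ ≥ … ≥ λ_p > 0 and define Ω(β) := Σ_{i=1}^p λ_i |β|_{(i)}, where |β|_{(1)} ≥ … ≥ |β|_{(p)} are the absolute values of the coordinates of β in decreasing order. Let S ⊂ {1,…,p} with |S| = s, r := p − s, and define Ω^{Sᶜ}(β_{Sᶜ}) := Σ_{l=1}^r λ_{s+l} |β|_{(l,Sᶜ)}, where |β|_{(1,Sᶜ)} ≥ … ≥ |β|_{(r,Sᶜ)} is the decreasing rearrangement of the absolute values of the coordinates of β in Sᶜ. Then for every β ∈ ℝ^p: Ω(β) ≥ Ω(β_S) + Ω^{Sᶜ}(β_{Sᶜ}). -/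
open scoped BigOperators

/-- The sorted `ℓ₁` norm `J_λ(β) = ∑ λ_i |β|_{(i)}`, where `|β|_{(1)} ≥ … ≥ |β|_{(p)}`.
For decreasing weights `λ` this equals, by the rearrangement inequality, the maximum
over all permutations `π` of `∑ λ_i |β_{π(i)}|`, which is how it is defined here. -/
noncomputable def sortedL1 {p : ℕ} (lam : Fin p → ℝ) (β : Fin p → ℝ) : ℝ :=
  ⨆ π : Equiv.Perm (Fin p), ∑ i, lam i * |β (π i)|

/-- The weight sequence `λ` shifted by `s` positions: position `i` carries weight
`λ_{s+i}` (and the smallest weight `λ_p` beyond the end). Used for the complement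
norm `Ω^{Sᶜ}(β_{Sᶜ}) = ∑_{l=1}^{p-s} λ_{s+l} |β|_{(l,Sᶜ)}` of the SLOPE norm. -/
noncomputable def shiftW {p : ℕ} (lam : Fin p → ℝ) (s : ℕ) : Fin p → ℝ :=
  fun i => if h : s + i.val < p then lam ⟨s + i.val, h⟩
    else lam ⟨p - 1, Nat.sub_lt i.pos Nat.one_pos⟩

private lemma strictMono_val_le' {a b : ℕ} {f : Fin a → Fin b} (hf : StrictMono f)
    (k : Fin a) : (k : ℕ) ≤ (f k : ℕ) := by
  obtain ⟨n, hn⟩ := k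
  induction n with
  | zero => simp
  | succ m ih =>
    have hm : m < a := by omega
    have h1 := ih hm
    have h2 : f ⟨m, hm⟩ < f ⟨m + 1, hn⟩ := hf (by simp [Fin.lt_def])
    have h3 := Fin.lt_def.mp h2
    simp only [Fin.val_mk] at h1 h3 ⊢
    omega

private lemma sum_orderEmbOfFin' {p n : ℕ} (A : Finset (Fin p)) (hA : A.card = n)
    (f : Fin p → ℝ) : ∑ i ∈ A, f i = ∑ k : Fin n, f (A.orderEmbOfFin hA k) := by
  rw [← Finset.sum_coe_sort A f,
    ← Equiv.sum_comp (A.orderIsoOfFin hA).toEquiv (fun x : A => f (x : Fin p))]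
  exact Fintype.sum_congr _ _ (fun k => rfl)

private lemma slope_key_step {p : ℕ} (lam : Fin p → ℝ)
    (hdec : ∀ i j : Fin p, i ≤ j → lam j ≤ lam i)
    (S : Finset (Fin p)) (β : Fin p → ℝ) (π₁ π₂ : Equiv.Perm (Fin p)) :
    ∃ π : Equiv.Perm (Fin p),
      (∑ i, lam i * |restrict S β (π₁ i)|) +
      (∑ i, shiftW lam S.card i * |restrict Sᶜ β (π₂ i)|)
        ≤ ∑ i, lam i * |β (π i)| := by
  classical
  set s := S.card with hs
  set r := Sᶜ.card with hrr
  have hsr : s + r = p := by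
    rw [hs, hrr, Finset.card_add_card_compl, Fintype.card_fin]
  -- the preimage sets
  set A : Finset (Fin p) := S.map π₁.symm.toEmbedding with hAdef
  set B : Finset (Fin p) := Sᶜ.map π₂.symm.toEmbedding with hBdef
  have hA : A.card = s := by rw [hAdef, Finset.card_map]
  have hB : B.card = r := by rw [hBdef, Finset.card_map]
  have hAmem : ∀ i, i ∈ A ↔ π₁ i ∈ S := by
    intro i; rw [hAdef]; simp [Finset.mem_map_equiv]
  have hBmem : ∀ i, i ∈ B ↔ π₂ i ∈ Sᶜ := by
    intro i; rw [hBdef]; simp [Finset.mem_map_equiv]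
  set eA := A.orderEmbOfFin hA with heA
  set eB := B.orderEmbOfFin hB with heB
  set E : Fin s ⊕ Fin r ≃ Fin p := finSumFinEquiv.trans (finCongr hsr) with hE
  set g : Fin s ⊕ Fin r → Fin p :=
    Sum.elim (fun k => π₁ (eA k)) (fun k => π₂ (eB k)) with hg
  have hgS : ∀ k, g (Sum.inl k) ∈ S := fun k =>
    (hAmem _).mp (Finset.orderEmbOfFin_mem A hA k)
  have hgSc : ∀ k, g (Sum.inr k) ∈ Sᶜ := fun k =>
    (hBmem _).mp (Finset.orderEmbOfFin_mem B hB k)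
  have hginj : Function.Injective g := by
    rintro (k | k) (l | l) h
    · simp only [hg, Sum.elim_inl] at h
      exact congrArg Sum.inl (eA.injective (π₁.injective h))
    · exfalso
      have h1 := hgS k
      have h2 := hgSc l
      rw [h] at h1
      exact (Finset.mem_compl.mp h2) h1
    · exfalso
      have h1 := hgS l
      have h2 := hgSc k
      rw [← h] at h1
      exact (Finset.mem_compl.mp h2) h1
    · simp only [hg, Sum.elim_inr] at h
      exact congrArg Sum.inr (eB.injective (π₂.injective h))
  have hgbij : Function.Bijective g :=
    (Fintype.bijective_iff_injective_and_card g).mpr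
      ⟨hginj, by simp [hsr]⟩
  set G : (Fin s ⊕ Fin r) ≃ Fin p := Equiv.ofBijective g hgbij with hG
  refine ⟨E.symm.trans G, ?_⟩
  -- rewrite the left sums as sums over A and B
  have e1 : (∑ i, lam i * |restrict S β (π₁ i)|) = ∑ i ∈ A, lam i * |β (π₁ i)| := by
    have : A = Finset.univ.filter (fun i => π₁ i ∈ S) := by
      ext i; simp [hAmem i]
    rw [this, Finset.sum_filter]
    apply Finset.sum_congr rfl
    intro i _
    by_cases h : π₁ i ∈ S <;> simp [restrict, h]
  have e2 : (∑ i, shiftW lam s i * |restrict Sᶜ β (π₂ i)|)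
      = ∑ i ∈ B, shiftW lam s i * |β (π₂ i)| := by
    have : B = Finset.univ.filter (fun i => π₂ i ∈ Sᶜ) := by
      ext i; simp [hBmem i]
    rw [this, Finset.sum_filter]
    apply Finset.sum_congr rfl
    intro i _
    by_cases h : π₂ i ∈ Sᶜ <;> simp [restrict, h]
  -- rewrite the right sum as a sum over the sum type
  have eR : (∑ i, lam i * |β ((E.symm.trans G) i)|)
      = (∑ k : Fin s, lam (E (Sum.inl k)) * |β (g (Sum.inl k))|)
      + (∑ k : Fin r, lam (E (Sum.inr k)) * |β (g (Sum.inr k))|) := by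
    rw [← Equiv.sum_comp E (fun i => lam i * |β ((E.symm.trans G) i)|),
      Fintype.sum_sum_type]
    congr 1 <;> exact Fintype.sum_congr _ _ (fun k => by
      simp [hG, Equiv.trans_apply, Equiv.symm_apply_apply, Equiv.ofBijective_apply])
  rw [e1, e2, eR, sum_orderEmbOfFin' A hA, sum_orderEmbOfFin' B hB]
  have hEl : ∀ k : Fin s, ((E (Sum.inl k) : Fin p) : ℕ) = (k : ℕ) := by
    intro k; simp [hE]
  have hEr : ∀ k : Fin r, ((E (Sum.inr k) : Fin p) : ℕ) = s + (k : ℕ) := by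
    intro k; simp [hE]
  apply add_le_add
  · apply Finset.sum_le_sum
    intro k _
    have hk : (k : ℕ) ≤ (eA k : ℕ) := strictMono_val_le' eA.strictMono k
    have : lam (eA k) ≤ lam (E (Sum.inl k)) := by
      apply hdec
      rw [Fin.le_def, hEl k]; exact hk
    have hb : g (Sum.inl k) = π₁ (eA k) := rfl
    rw [hb]
    exact mul_le_mul_of_nonneg_right this (abs_nonneg _)
  · apply Finset.sum_le_sum
    intro k _
    have hk : (k : ℕ) ≤ (eB k : ℕ) := strictMono_val_le' eB.strictMono k
    have hlt : s + (k : ℕ) < p := by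
      have h := (E (Sum.inr k)).isLt
      rw [hEr k] at h; exact h
    have hw : shiftW lam s (eB k) ≤ lam (E (Sum.inr k)) := by
      unfold shiftW
      split_ifs with h
      · apply hdec
        rw [Fin.le_def, hEr k]; simp only [Fin.val_mk]; omega
      · apply hdec
        rw [Fin.le_def, hEr k]; simp only [Fin.val_mk]; omega
    have hb : g (Sum.inr k) = π₂ (eB k) := rfl
    rw [hb]
    exact mul_le_mul_of_nonneg_right hw (abs_nonneg _)

/-- weak decomposability of the sorted `ℓ₁` (SLOPE) norm:
`Ω(β) ≥ Ω(β_S) + Ω^{Sᶜ}(β_{Sᶜ})`. -/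
theorem slope_weakly_decomposable {p : ℕ} (lam : Fin p → ℝ)
    (hdec : ∀ i j : Fin p, i ≤ j → lam j ≤ lam i) (hpos : ∀ i, 0 < lam i)
    (S : Finset (Fin p)) (β : Fin p → ℝ) :
    sortedL1 lam (restrict S β) + sortedL1 (shiftW lam S.card) (restrict Sᶜ β)
      ≤ sortedL1 lam β := by
  unfold sortedL1
  obtain ⟨π₁, h₁⟩ := exists_eq_ciSup_of_finite
    (f := fun π : Equiv.Perm (Fin p) => ∑ i, lam i * |restrict S β (π i)|)
  obtain ⟨π₂, h₂⟩ := exists_eq_ciSup_of_finite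
    (f := fun π : Equiv.Perm (Fin p) => ∑ i, shiftW lam S.card i * |restrict Sᶜ β (π i)|)
  rw [← h₁, ← h₂]
  obtain ⟨π, hπ⟩ := slope_key_step lam hdec S β π₁ π₂
  exact hπ.trans (le_ciSup (f := fun π : Equiv.Perm (Fin p) => ∑ i, lam i * |β (π i)|)
    (Set.Finite.bddAbove (Set.finite_range _)) π)
end

section
/- (Maximality of the SLOPE complement norm.) Let λ₁ ≥ λ₂ ≥ … ≥ λ_p > 0, Ω(β) := Σ_{i=1}^p λ_i |β|_{(i)}, S ⊂ {1,…,p} with |S| = s, r := p − s, and Ω^{Sᶜ}(β_{Sᶜ}) := Σ_{l=1}^r λ_{s+l} |β|_{(l,Sᶜ)}. If Ω̲ is any norm on the coordinates Sᶜ such that Ω(β) ≥ Ω(β_S) + Ω̲(β_{Sᶜ}) for all β ∈ ℝ^p, then Ω̲(v) ≤ Ω^{Sᶜ}(v) for every vector v supported on Sᶜ. -/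
open scoped BigOperators

section SlopeAux

/-- Summing over the indices `< s` equals summing over `Fin s` via `castLE`. -/
lemma slope_filter_lt_sum {p s : ℕ} (hsp : s ≤ p) (F : Fin p → ℝ) :
    ∑ i ∈ Finset.univ.filter (fun i : Fin p => i.val < s), F i
      = ∑ k : Fin s, F (Fin.castLE hsp k) := by
  have himg : Finset.univ.filter (fun i : Fin p => i.val < s)
      = Finset.univ.image (Fin.castLE hsp) := by
    ext i
    simp only [Finset.mem_filter, Finset.mem_univ, true_and, Finset.mem_image]
    constructor
    · intro h; exact ⟨⟨i.val, h⟩, by ext; rfl⟩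
    · rintro ⟨k, rfl⟩; exact k.isLt
  rw [himg, Finset.sum_image (fun a _ b _ hab => Fin.castLE_injective hsp hab)]

/-- The `l`-th smallest element of a finset of `Fin p` of size `r` has index at
most `(p - r) + l`. -/
lemma slope_orderIsoOfFin_val_le {p r : ℕ} (B : Finset (Fin p)) (hB : B.card = r)
    (l : Fin r) : ((B.orderIsoOfFin hB l : Fin p) : ℕ) ≤ (p - r) + l.val := by
  classical
  set x : Fin p := (B.orderIsoOfFin hB l : Fin p) with hx
  have hIio : (Finset.Iio x).card = x.val := by simp
  have hsplit : (Finset.Iio x ∩ B).card + (Finset.Iio x \ B).card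
      = (Finset.Iio x).card := Finset.card_inter_add_card_sdiff _ _
  have h1 : (Finset.Iio x \ B).card ≤ p - r := by
    have hsub : Finset.Iio x \ B ⊆ Bᶜ := fun y hy =>
      Finset.mem_compl.mpr (Finset.mem_sdiff.mp hy).2
    calc (Finset.Iio x \ B).card ≤ Bᶜ.card := Finset.card_le_card hsub
      _ = p - r := by rw [Finset.card_compl, hB, Fintype.card_fin]
  have h2 : (Finset.Iio x ∩ B).card ≤ l.val := by
    have hmap : ∀ y ∈ Finset.Iio x ∩ B,
        (if hy : y ∈ B then (B.orderIsoOfFin hB).symm ⟨y, hy⟩ else l)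
          ∈ Finset.Iio l := by
      intro y hy
      have hyB : y ∈ B := (Finset.mem_inter.mp hy).2
      have hylt : y < x := Finset.mem_Iio.mp (Finset.mem_inter.mp hy).1
      rw [dif_pos hyB, Finset.mem_Iio]
      rw [← (B.orderIsoOfFin hB).lt_iff_lt, OrderIso.apply_symm_apply]
      exact Subtype.coe_lt_coe.mp hylt
    have hinj : Set.InjOn
        (fun y => if hy : y ∈ B then (B.orderIsoOfFin hB).symm ⟨y, hy⟩ else l)
        (Finset.Iio x ∩ B : Finset (Fin p)) := by
      intro y1 hy1 y2 hy2 heq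
      have hy1B : y1 ∈ B := (Finset.mem_inter.mp (Finset.mem_coe.mp hy1)).2
      have hy2B : y2 ∈ B := (Finset.mem_inter.mp (Finset.mem_coe.mp hy2)).2
      simp only [dif_pos hy1B, dif_pos hy2B] at heq
      have := (B.orderIsoOfFin hB).symm.injective heq
      exact Subtype.mk_eq_mk.mp this
    have := Finset.card_le_card_of_injOn _ hmap hinj
    simpa [Fin.card_Iio] using this
  omega

end SlopeAux

/-- maximality of the SLOPE complement norm. Any norm `Ω̲` on the
coordinates `Sᶜ` with `Ω(β) ≥ Ω(β_S) + Ω̲(β_{Sᶜ})` for all `β` satisfies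
`Ω̲(v) ≤ Ω^{Sᶜ}(v)` for all `v` supported on `Sᶜ`. -/
theorem slope_complement_norm_maximal {p : ℕ} (lam : Fin p → ℝ)
    (hdec : ∀ i j : Fin p, i ≤ j → lam j ≤ lam i) (hpos : ∀ i, 0 < lam i)
    (S : Finset (Fin p))
    (Ou : (Fin p → ℝ) → ℝ) (hOu : IsNormOn S Ou)
    (hweak : ∀ β : Fin p → ℝ,
      sortedL1 lam (restrict S β) + Ou (restrict Sᶜ β) ≤ sortedL1 lam β) :
    ∀ v : Fin p → ℝ, (∀ i ∈ S, v i = 0) →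
      Ou v ≤ sortedL1 (shiftW lam S.card) v := by
  classical
  intro v hv
  set s := S.card with hs
  have hsp : s ≤ p := by
    have := Finset.card_le_univ S
    simpa [hs] using this
  set r := p - s with hr
  have hsr : s + r = p := by omega
  have hrp : r ≤ p := by omega
  set M : ℝ := ∑ j, |v j| with hM
  have hM0 : 0 ≤ M := by
    rw [hM]; exact Finset.sum_nonneg fun j _ => abs_nonneg _
  have hMv : ∀ i, |v i| ≤ M := by
    intro i
    rw [hM]
    exact Finset.single_le_sum (f := fun j => |v j|) (fun j _ => abs_nonneg _) (Finset.mem_univ i)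
  set β : Fin p → ℝ := fun i => if i ∈ S then M else v i with hβ
  have hrestc : restrict Sᶜ β = v := by
    funext i
    by_cases hiS : i ∈ S
    · simp [restrict, hiS, hv i hiS]
    · simp [restrict, hβ, hiS]
  set C : ℝ := ∑ k : Fin s, lam (Fin.castLE hsp k) with hC
  have hbdd : ∀ (w g : Fin p → ℝ),
      BddAbove (Set.range fun π : Equiv.Perm (Fin p) => ∑ i, w i * |g (π i)|) :=
    fun w g => Set.Finite.bddAbove (Set.finite_range _)
  -- the split identity for ∑ lam
  have hlamsplit : (∑ i : Fin p, lam i)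
      = C + ∑ l : Fin r, lam ⟨s + l.val, by omega⟩ := by
    rw [← Finset.sum_filter_add_sum_filter_not Finset.univ (fun i : Fin p => i.val < s)]
    congr 1
    · exact slope_filter_lt_sum hsp lam
    · have himg : Finset.univ.filter (fun i : Fin p => ¬ i.val < s)
          = Finset.univ.image (fun l : Fin r => (⟨s + l.val, by omega⟩ : Fin p)) := by
        ext i
        simp only [Finset.mem_filter, Finset.mem_univ, true_and, Finset.mem_image]
        constructor
        · intro h
          exact ⟨⟨i.val - s, by omega⟩, by ext; simp; omega⟩
        · rintro ⟨l, rfl⟩; simp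
      rw [himg, Finset.sum_image]
      intro a _ b _ hab
      have : s + a.val = s + b.val := congrArg Fin.val hab
      ext; omega
  -- Step 1 : lower bound on sortedL1 lam (restrict S β)
  have hScard : S.card = s := hs.symm
  have hSccard : Sᶜ.card = r := by
    rw [Finset.card_compl, hScard, Fintype.card_fin]
  set gS := S.orderIsoOfFin hScard with hgS
  set fSc := Sᶜ.orderIsoOfFin hSccard with hfSc
  have hlow : M * C ≤ sortedL1 lam (restrict S β) := by
    set τfun : Fin p → Fin p := fun i =>
      if h : i.val < s then (gS ⟨i.val, h⟩ : Fin p)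
      else (fSc ⟨i.val - s, by omega⟩ : Fin p) with hτfun
    have hτinj : Function.Injective τfun := by
      intro a b hab
      simp only [hτfun] at hab
      by_cases ha : a.val < s <;> by_cases hb : b.val < s
      · rw [dif_pos ha, dif_pos hb] at hab
        have := gS.injective (Subtype.coe_injective hab)
        have := congrArg Fin.val this
        simp at this; ext; omega
      · rw [dif_pos ha, dif_neg hb] at hab
        have h1 : (gS ⟨a.val, ha⟩ : Fin p) ∈ S := (gS ⟨a.val, ha⟩).2
        have h2 : (fSc ⟨b.val - s, by omega⟩ : Fin p) ∈ Sᶜ :=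
          (fSc ⟨b.val - s, by omega⟩).2
        rw [hab] at h1
        exact absurd h1 (Finset.mem_compl.mp h2)
      · rw [dif_neg ha, dif_pos hb] at hab
        have h1 : (gS ⟨b.val, hb⟩ : Fin p) ∈ S := (gS ⟨b.val, hb⟩).2
        have h2 : (fSc ⟨a.val - s, by omega⟩ : Fin p) ∈ Sᶜ :=
          (fSc ⟨a.val - s, by omega⟩).2
        rw [← hab] at h1
        exact absurd h1 (Finset.mem_compl.mp h2)
      · rw [dif_neg ha, dif_neg hb] at hab
        have := fSc.injective (Subtype.coe_injective hab)
        have := congrArg Fin.val this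
        simp at this; ext; omega
    set τ : Equiv.Perm (Fin p) :=
      Equiv.ofBijective τfun (Finite.injective_iff_bijective.mp hτinj) with hτ
    have hτval : ∑ i : Fin p, lam i * |restrict S β (τ i)| = M * C := by
      rw [← Finset.sum_filter_add_sum_filter_not Finset.univ (fun i : Fin p => i.val < s)]
      have hz : ∑ i ∈ Finset.univ.filter (fun i : Fin p => ¬ i.val < s),
          lam i * |restrict S β (τ i)| = 0 := by
        apply Finset.sum_eq_zero
        intro i hi
        have hi' : ¬ i.val < s := (Finset.mem_filter.mp hi).2
        have hτi : τ i = (fSc ⟨i.val - s, by omega⟩ : Fin p) := by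
          simp only [hτ, Equiv.ofBijective_apply, hτfun, dif_neg hi']
        have : restrict S β (τ i) = 0 := by
          have hmem : τ i ∈ Sᶜ := hτi ▸ (fSc ⟨i.val - s, by omega⟩).2
          simp [restrict, Finset.mem_compl.mp hmem]
        rw [this]; simp
      rw [hz, add_zero]
      have hv' : ∀ i ∈ Finset.univ.filter (fun i : Fin p => i.val < s),
          lam i * |restrict S β (τ i)| = lam i * M := by
        intro i hi
        have hi' : i.val < s := (Finset.mem_filter.mp hi).2
        have hτi : τ i = (gS ⟨i.val, hi'⟩ : Fin p) := by
          simp only [hτ, Equiv.ofBijective_apply, hτfun, dif_pos hi']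
        have hmem : τ i ∈ S := hτi ▸ (gS ⟨i.val, hi'⟩).2
        have : restrict S β (τ i) = M := by simp [restrict, hmem, hβ]
        rw [this, abs_of_nonneg hM0]
      rw [Finset.sum_congr rfl hv', slope_filter_lt_sum hsp (fun i => lam i * M), hC,
        ← Finset.sum_mul]
      ring
    calc M * C = ∑ i : Fin p, lam i * |restrict S β (τ i)| := hτval.symm
      _ ≤ sortedL1 lam (restrict S β) := le_ciSup (hbdd lam (restrict S β)) τ
  -- Step 2 : upper bound on sortedL1 lam β
  have hup : sortedL1 lam β ≤ M * C + sortedL1 (shiftW lam s) v := by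
    apply ciSup_le
    intro π
    -- the preimage of S under π
    set A : Finset (Fin p) := S.map π.symm.toEmbedding with hA'
    have hAmem : ∀ i, i ∈ A ↔ π i ∈ S := by
      intro i
      simp only [hA', Finset.mem_map, Equiv.coe_toEmbedding]
      constructor
      · rintro ⟨a, ha, rfl⟩; simpa using ha
      · intro h; exact ⟨π i, h, by simp⟩
    have hA : A.card = s := by rw [hA', Finset.card_map, hScard]
    have hAc : Aᶜ.card = r := by rw [Finset.card_compl, hA, Fintype.card_fin]
    set f := Aᶜ.orderIsoOfFin hAc with hf
    have hfle : ∀ l : Fin r, ((f l : Fin p) : ℕ) ≤ s + l.val := by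
      intro l
      have h := slope_orderIsoOfFin_val_le Aᶜ hAc l
      rw [← hf] at h
      omega
    set gA := A.orderIsoOfFin hA with hgA
    set w : Fin r → ℝ := fun l => lam ⟨s + l.val, by omega⟩ with hw
    -- the permutation σ for the shifted weights
    set σfun : Fin p → Fin p := fun i =>
      if h : i.val < r then π (f ⟨i.val, h⟩ : Fin p)
      else π (gA ⟨i.val - r, by omega⟩ : Fin p) with hσfun
    have hσinj : Function.Injective σfun := by
      intro a b hab
      simp only [hσfun] at hab
      by_cases ha : a.val < r <;> by_cases hb : b.val < r
      · rw [dif_pos ha, dif_pos hb] at hab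
        have := f.injective (Subtype.coe_injective (π.injective hab))
        have := congrArg Fin.val this
        simp at this; ext; omega
      · rw [dif_pos ha, dif_neg hb] at hab
        have hab' := π.injective hab
        have h1 : (f ⟨a.val, ha⟩ : Fin p) ∈ Aᶜ := (f ⟨a.val, ha⟩).2
        have h2 : (gA ⟨b.val - r, by omega⟩ : Fin p) ∈ A :=
          (gA ⟨b.val - r, by omega⟩).2
        rw [hab'] at h1
        exact absurd h2 (Finset.mem_compl.mp h1)
      · rw [dif_neg ha, dif_pos hb] at hab
        have hab' := π.injective hab
        have h1 : (f ⟨b.val, hb⟩ : Fin p) ∈ Aᶜ := (f ⟨b.val, hb⟩).2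
        have h2 : (gA ⟨a.val - r, by omega⟩ : Fin p) ∈ A :=
          (gA ⟨a.val - r, by omega⟩).2
        rw [← hab'] at h1
        exact absurd h2 (Finset.mem_compl.mp h1)
      · rw [dif_neg ha, dif_neg hb] at hab
        have := gA.injective (Subtype.coe_injective (π.injective hab))
        have := congrArg Fin.val this
        simp at this; ext; omega
    set σ : Equiv.Perm (Fin p) :=
      Equiv.ofBijective σfun (Finite.injective_iff_bijective.mp hσinj) with hσ
    -- the value of the σ-sum for the shifted weights
    have hσsum : ∑ i : Fin p, shiftW lam s i * |v (σ i)|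
        = ∑ l : Fin r, w l * |v (π (f l : Fin p))| := by
      rw [← Finset.sum_filter_add_sum_filter_not Finset.univ (fun i : Fin p => i.val < r)]
      have hz : ∑ i ∈ Finset.univ.filter (fun i : Fin p => ¬ i.val < r),
          shiftW lam s i * |v (σ i)| = 0 := by
        apply Finset.sum_eq_zero
        intro i hi
        have hi' : ¬ i.val < r := (Finset.mem_filter.mp hi).2
        have hσi : σ i = π (gA ⟨i.val - r, by omega⟩ : Fin p) := by
          simp only [hσ, Equiv.ofBijective_apply, hσfun, dif_neg hi']
        have hmem : (gA ⟨i.val - r, by omega⟩ : Fin p) ∈ A :=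
          (gA ⟨i.val - r, by omega⟩).2
        have : v (σ i) = 0 := by
          rw [hσi]
          exact hv _ ((hAmem _).mp hmem)
        rw [this]; simp
      rw [hz, add_zero, slope_filter_lt_sum hrp (fun i => shiftW lam s i * |v (σ i)|)]
      apply Finset.sum_congr rfl
      intro l _
      have h1 : (Fin.castLE hrp l).val < r := l.isLt
      have hσl : σ (Fin.castLE hrp l) = π (f ⟨(Fin.castLE hrp l).val, h1⟩ : Fin p) := by
        simp only [hσ, Equiv.ofBijective_apply, hσfun, dif_pos h1]
      have hcast : (⟨(Fin.castLE hrp l).val, h1⟩ : Fin r) = l := by ext; rfl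
      rw [hσl, hcast]
      congr 1
      show shiftW lam s (Fin.castLE hrp l) = w l
      simp only [shiftW, hw]
      rw [dif_pos (show s + (Fin.castLE hrp l).val < p by simp [Fin.castLE]; omega)]
      rfl
    have hss : ∑ l : Fin r, w l * |v (π (f l : Fin p))| ≤ sortedL1 (shiftW lam s) v :=
      hσsum ▸ le_ciSup (hbdd (shiftW lam s) v) σ
    -- decompose the π-sum
    have hsplitA : ∑ i : Fin p, lam i * |β (π i)|
        = (∑ i ∈ A, lam i) * M + ∑ l : Fin r, lam (f l : Fin p) * |v (π (f l : Fin p))| := by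
      rw [← Finset.sum_add_sum_compl A (fun i => lam i * |β (π i)|)]
      congr 1
      · rw [Finset.sum_mul]
        apply Finset.sum_congr rfl
        intro i hi
        have : β (π i) = M := by simp [hβ, (hAmem i).mp hi]
        rw [this, abs_of_nonneg hM0]
      · have hcongr : ∀ i ∈ Aᶜ, lam i * |β (π i)| = lam i * |v (π i)| := by
          intro i hi
          have hiS : π i ∉ S := fun h => (Finset.mem_compl.mp hi) ((hAmem i).mpr h)
          simp [hβ, hiS]
        rw [Finset.sum_congr rfl hcongr,
          ← Finset.sum_coe_sort Aᶜ (fun i => lam i * |v (π i)|)]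
        exact (Equiv.sum_comp f.toEquiv
          (fun x : ↥(Aᶜ) => lam (x : Fin p) * |v (π (x : Fin p))|)).symm
    -- termwise bound
    have hterm : ∀ l : Fin r, lam (f l : Fin p) * |v (π (f l : Fin p))|
        ≤ w l * |v (π (f l : Fin p))| + (lam (f l : Fin p) - w l) * M := by
      intro l
      have h1 : w l ≤ lam (f l : Fin p) := by
        apply hdec
        show (f l : Fin p) ≤ (⟨s + l.val, by omega⟩ : Fin p)
        exact hfle l
      have h2 : |v (π (f l : Fin p))| ≤ M := hMv _
      nlinarith [abs_nonneg (v (π (f l : Fin p)))]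
    -- sum over Aᶜ of lam
    have hAcsum : ∑ l : Fin r, lam (f l : Fin p) = ∑ i ∈ Aᶜ, lam i := by
      rw [← Finset.sum_coe_sort Aᶜ lam]
      exact Equiv.sum_comp f.toEquiv (fun x : ↥(Aᶜ) => lam (x : Fin p))
    have hAAc : (∑ i ∈ A, lam i) + ∑ i ∈ Aᶜ, lam i = ∑ i : Fin p, lam i :=
      Finset.sum_add_sum_compl A lam
    have hwsum : ∑ l : Fin r, w l = ∑ l : Fin r, lam ⟨s + l.val, by omega⟩ := rfl
    calc ∑ i : Fin p, lam i * |β (π i)|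
        = (∑ i ∈ A, lam i) * M + ∑ l : Fin r, lam (f l : Fin p) * |v (π (f l : Fin p))| :=
          hsplitA
      _ ≤ (∑ i ∈ A, lam i) * M
            + ∑ l : Fin r, (w l * |v (π (f l : Fin p))| + (lam (f l : Fin p) - w l) * M) := by
          gcongr with l _
          exact hterm l
      _ = ((∑ i ∈ A, lam i) + (∑ l : Fin r, lam (f l : Fin p)) - ∑ l : Fin r, w l) * M
            + ∑ l : Fin r, w l * |v (π (f l : Fin p))| := by
          rw [Finset.sum_add_distrib, ← Finset.sum_mul, Finset.sum_sub_distrib]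
          ring
      _ = M * C + ∑ l : Fin r, w l * |v (π (f l : Fin p))| := by
          rw [hAcsum, hAAc, hwsum, hlamsplit]
          ring
      _ ≤ M * C + sortedL1 (shiftW lam s) v := by linarith [hss]
  have hwk := hweak β
  rw [hrestc] at hwk
  linarith [hlow, hup, hwk]
end
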